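/- arXiv:1804.02570 — 6 statements merged into one kernel-verified Lean document; each statement's English description precedes it below -/
import Mathlib

section
/- A squarefree positive integer t is a congruent number if and only if t is the squarefree part of the area of some primitive Pythagorean triple, i.e., a triple of pairwise coprime positive integers (a,b,c) with a^2 + b^2 = c^2 and ab/2 = t·n^2 for some positive integer n. -/
/-!
Clearing denominators turns a rational right triangle of area `t` into an integral one of area
`t * d ^ 2`; dividing by `g = gcd` of the legs makes it primitive, of area `u` with
`u * g ^ 2 = t * d ^ 2` (the area is an integer because one leg of a Pythagorean triple is
even). Then `u * t` is a square, and as `t` is squarefree, `u = t * m ^ 2`.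
Conversely, scaling a primitive triple of area `t * n ^ 2` by `1 / n` gives area `t`.
-/

theorem Rat.exists_natCast_eq_mul_of_den_dvd {q : ℚ} (hq : 0 ≤ q) {d : ℕ} (h : q.den ∣ d) :
    ∃ n : ℕ, (n : ℚ) = q * d := by
  obtain ⟨k, rfl⟩ := h
  refine ⟨q.num.toNat * k, ?_⟩
  have hnum : ((q.num.toNat : ℕ) : ℚ) = q.num := by
    exact_mod_cast Int.toNat_of_nonneg (Rat.num_nonneg.mpr hq)
  push_cast
  rw [hnum, ← Rat.mul_den_eq_num]
  ring

theorem exists_nat_sq_add_sq_eq_sq_of_rat {t : ℕ} {a b c : ℚ} (ha : 0 < a) (hb : 0 < b)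
    (hc : 0 < c) (hpyth : a ^ 2 + b ^ 2 = c ^ 2) (harea : a * b / 2 = t) :
    ∃ A B C d : ℕ, 0 < A ∧ 0 < B ∧ 0 < d ∧
      A ^ 2 + B ^ 2 = C ^ 2 ∧ A * B = 2 * (t * d ^ 2) := by
  have hd : 0 < a.den * b.den * c.den := by positivity
  obtain ⟨A, hA⟩ := Rat.exists_natCast_eq_mul_of_den_dvd ha.le
    (dvd_mul_of_dvd_left (dvd_mul_right a.den b.den) c.den)
  obtain ⟨B, hB⟩ := Rat.exists_natCast_eq_mul_of_den_dvd hb.le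
    (dvd_mul_of_dvd_left (dvd_mul_left b.den a.den) c.den)
  obtain ⟨C, hC⟩ := Rat.exists_natCast_eq_mul_of_den_dvd hc.le
    (dvd_mul_left c.den (a.den * b.den))
  generalize a.den * b.den * c.den = d at hd hA hB hC
  refine ⟨A, B, C, d, ?_, ?_, hd, ?_, ?_⟩
  · exact_mod_cast hA ▸ (by positivity : 0 < a * d)
  · exact_mod_cast hB ▸ (by positivity : 0 < b * d)
  · have : (A : ℚ) ^ 2 + B ^ 2 = C ^ 2 := by
      rw [hA, hB, hC]
      linear_combination (d : ℚ) ^ 2 * hpyth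
    exact_mod_cast this
  · have : (A : ℚ) * B = 2 * (t * d ^ 2) := by
      rw [hA, hB]
      linear_combination 2 * (d : ℚ) ^ 2 * harea
    exact_mod_cast this

theorem exists_rat_sq_add_sq_eq_sq_of_nat {t a b c n : ℕ} (ha : 0 < a) (hb : 0 < b) (hc : 0 < c)
    (hn : 0 < n) (hpyth : a ^ 2 + b ^ 2 = c ^ 2) (harea : a * b = 2 * (t * n ^ 2)) :
    ∃ a b c : ℚ, 0 < a ∧ 0 < b ∧ 0 < c ∧ a ^ 2 + b ^ 2 = c ^ 2 ∧ a * b / 2 = t := by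
  have hn' : (n : ℚ) ≠ 0 := by positivity
  refine ⟨a / n, b / n, c / n, by positivity, by positivity, by positivity, ?_, ?_⟩
  · field_simp
    exact_mod_cast hpyth
  · field_simp
    exact_mod_cast harea.trans (by ring)

namespace Nat

theorem exists_coprime_of_sq_add_sq_eq_sq {A B C : ℕ} (hA : 0 < A) (h : A ^ 2 + B ^ 2 = C ^ 2) :
    ∃ g a b c, 0 < g ∧ A = g * a ∧ B = g * b ∧ C = g * c ∧
      Coprime a b ∧ a ^ 2 + b ^ 2 = c ^ 2 := by
  have hg : 0 < A.gcd B := Nat.gcd_pos_of_pos_left B hA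
  have hcop := Nat.coprime_div_gcd_div_gcd hg
  obtain ⟨a, ha⟩ : A.gcd B ∣ A := Nat.gcd_dvd_left A B
  obtain ⟨b, hb⟩ : A.gcd B ∣ B := Nat.gcd_dvd_right A B
  generalize A.gcd B = g at hg hcop ha hb
  subst ha hb
  obtain ⟨c, rfl⟩ : g ∣ C := by
    rw [← Nat.pow_dvd_pow_iff two_ne_zero, ← h]
    exact ⟨a ^ 2 + b ^ 2, by ring⟩
  refine ⟨g, a, b, c, hg, rfl, rfl, rfl, ?_, ?_⟩
  · rwa [Nat.mul_div_cancel_left _ hg, Nat.mul_div_cancel_left _ hg] at hcop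
  · apply Nat.eq_of_mul_eq_mul_left (pow_pos hg 2)
    linear_combination h

theorem Coprime.coprime_right_of_sq_add_sq_eq_sq {a b c : ℕ} (hab : Coprime a b)
    (h : a ^ 2 + b ^ 2 = c ^ 2) : Coprime b c := by
  have : Coprime (b ^ 2) (c ^ 2) := by
    rw [← h]
    exact Nat.coprime_add_self_right.mpr (Coprime.pow 2 2 hab.symm)
  exact (Nat.coprime_pow_left_iff two_pos _ _).mp ((Nat.coprime_pow_right_iff two_pos _ _).mp this)

theorem even_mul_of_sq_add_sq_eq_sq {a b c : ℕ} (h : a ^ 2 + b ^ 2 = c ^ 2) : Even (a * b) := by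
  have sq_mod_four (n : ℕ) : n ^ 2 % 4 = n % 2 := by
    rcases Nat.even_or_odd' n with ⟨k, rfl | rfl⟩ <;> ring_nf <;> omega
  rw [Nat.even_mul, Nat.even_iff, Nat.even_iff]
  have := sq_mod_four a; have := sq_mod_four b; have := sq_mod_four c
  omega

end Nat

theorem Squarefree.exists_eq_mul_sq_of_mul_sq_eq_mul_sq {t u g d : ℕ} (ht : Squarefree t)
    (hg : g ≠ 0) (h : u * g ^ 2 = t * d ^ 2) : ∃ m, u = t * m ^ 2 := by
  have hsq : u * t * g ^ 2 = (t * d) ^ 2 := by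
    rw [mul_right_comm, h]
    ring
  obtain ⟨k, hk⟩ : g ∣ t * d := by
    rw [← Nat.pow_dvd_pow_iff two_ne_zero, ← hsq]
    exact Dvd.intro_left _ rfl
  have hut : u * t = k ^ 2 := by
    apply Nat.eq_of_mul_eq_mul_right (pow_pos (Nat.pos_of_ne_zero hg) 2)
    rw [hsq, hk]
    ring
  obtain ⟨m, rfl⟩ : t ∣ k :=
    (ht.dvd_pow_iff_dvd two_ne_zero).mp ⟨u, by rw [← hut, mul_comm]⟩
  refine ⟨m, Nat.eq_of_mul_eq_mul_right (Nat.pos_of_ne_zero ht.ne_zero) ?_⟩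
  rw [hut]
  ring

theorem congruent_iff_squarefree_part_of_primitive_area_general (t : ℕ)
    (htsf : Squarefree t) :
    (∃ a b c : ℚ, 0 < a ∧ 0 < b ∧ 0 < c ∧ a ^ 2 + b ^ 2 = c ^ 2 ∧ a * b / 2 = t) ↔
      ∃ a b c n : ℕ, 0 < a ∧ 0 < b ∧ 0 < c ∧ 0 < n ∧
        Nat.Coprime a b ∧ Nat.Coprime a c ∧ Nat.Coprime b c ∧
        a ^ 2 + b ^ 2 = c ^ 2 ∧ a * b = 2 * (t * n ^ 2) := by
  refine ⟨fun ⟨a, b, c, ha, hb, hc, hpyth, harea⟩ => ?_,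
    fun ⟨a, b, c, n, ha, hb, hc, hn, _, _, _, hpyth, harea⟩ =>
      exists_rat_sq_add_sq_eq_sq_of_nat ha hb hc hn hpyth harea⟩
  obtain ⟨A, B, C, d, hA, hB, hd, hpyth, harea⟩ :=
    exists_nat_sq_add_sq_eq_sq_of_rat ha hb hc hpyth harea
  obtain ⟨g, a, b, c, hg, rfl, rfl, rfl, hab, hpyth⟩ :=
    Nat.exists_coprime_of_sq_add_sq_eq_sq hA hpyth
  obtain ⟨u, hu⟩ := Nat.even_mul_of_sq_add_sq_eq_sq hpyth
  have hu_area : u * g ^ 2 = t * d ^ 2 := by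
    apply Nat.eq_of_mul_eq_mul_left two_pos
    rw [← harea, mul_mul_mul_comm, ← sq, hu]
    ring
  obtain ⟨m, rfl⟩ := htsf.exists_eq_mul_sq_of_mul_sq_eq_mul_sq hg.ne' hu_area
  have ha : 0 < a := Nat.pos_of_mul_pos_left hA
  have hb : 0 < b := Nat.pos_of_mul_pos_left hB
  have hm : 0 < m := Nat.pos_of_ne_zero <| by
    rintro rfl
    exact (Nat.mul_pos ha hb).ne' (by simpa using hu)
  exact ⟨a, b, c, m, ha, hb, by nlinarith, hm, hab,
    hab.symm.coprime_right_of_sq_add_sq_eq_sq (by rwa [add_comm]),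
    hab.coprime_right_of_sq_add_sq_eq_sq hpyth, hpyth, by rw [hu]; ring⟩

theorem congruent_iff_squarefree_part_of_primitive_area (t : ℕ) (ht : 0 < t)
    (htsf : Squarefree t) :
    (∃ a b c : ℚ, 0 < a ∧ 0 < b ∧ 0 < c ∧ a ^ 2 + b ^ 2 = c ^ 2 ∧ a * b / 2 = t) ↔
      ∃ a b c n : ℕ, 0 < a ∧ 0 < b ∧ 0 < c ∧ 0 < n ∧
        Nat.Coprime a b ∧ Nat.Coprime a c ∧ Nat.Coprime b c ∧
        a ^ 2 + b ^ 2 = c ^ 2 ∧ a * b = 2 * (t * n ^ 2) :=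
  congruent_iff_squarefree_part_of_primitive_area_general t htsf
end

section
/- Let t be a squarefree positive integer, and let m, n be coprime positive integers such that m^2 - t·n^2 and m^2 + t·n^2 are both perfect (nonnegative) squares. Then a = (√(m^2+tn^2) - √(m^2-tn^2))/2 and b = (√(m^2+tn^2) + √(m^2-tn^2))/2 are positive integers, (a, b, m) is a primitive Pythagorean triple, and ab/2 = t·(n/2)^2. -/
theorem square_progression_gives_primitive_triple (t : ℕ) (ht : 0 < t)
    (htsf : Squarefree t) (m n p q : ℕ)
    (hm : 0 < m) (hn : 0 < n) (hmn : Nat.Coprime m n)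
    (hp : p ^ 2 + t * n ^ 2 = m ^ 2) (hq : q ^ 2 = m ^ 2 + t * n ^ 2) :
    ∃ a b : ℕ, 2 * a = q - p ∧ 2 * b = q + p ∧ 0 < a ∧ 0 < b ∧
      a ^ 2 + b ^ 2 = m ^ 2 ∧
      Nat.Coprime a b ∧ Nat.Coprime a m ∧ Nat.Coprime b m ∧
      2 * (a * b) = t * n ^ 2 := by
  have htn : 0 < t * n ^ 2 := by positivity
  have hpm : p < m := by nlinarith
  have hmq : m < q := by nlinarith
  have hpq : p < q := lt_trans hpm hmq
  have hsum : q ^ 2 + p ^ 2 = 2 * m ^ 2 := by omega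
  -- parity
  have heven : (q + p) % 2 = 0 := by
    have h1 : q ^ 2 % 2 = q % 2 := by
      rcases Nat.even_or_odd q with h | h <;> rcases h with ⟨k, hk⟩ <;> subst hk <;> ring_nf <;> omega
    have h2 : p ^ 2 % 2 = p % 2 := by
      rcases Nat.even_or_odd p with h | h <;> rcases h with ⟨k, hk⟩ <;> subst hk <;> ring_nf <;> omega
    omega
  obtain ⟨a, ha⟩ : ∃ a, q = 2 * a + p := ⟨(q - p) / 2, by omega⟩
  subst ha
  have ha0 : 0 < a := by omega
  have harea : 2 * (a * (a + p)) = t * n ^ 2 := by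
    have e2 : (2 * a + p) ^ 2 = p ^ 2 + 2 * (2 * (a * (a + p))) := by ring
    rw [e2] at hq
    linarith
  have hpyth : a ^ 2 + (a + p) ^ 2 = m ^ 2 := by
    have e1 : a ^ 2 + (a + p) ^ 2 = p ^ 2 + 2 * (a * (a + p)) := by ring
    rw [e1, harea]
    exact hp
  -- coprimality a b
  have hcop : Nat.Coprime a (a + p) := by
    by_contra hne
    obtain ⟨r, hr, hrd⟩ := Nat.exists_prime_and_dvd hne
    have hra : r ∣ a := hrd.trans (Nat.gcd_dvd_left _ _)
    have hrb : r ∣ a + p := hrd.trans (Nat.gcd_dvd_right _ _)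
    have hrp : r ∣ p := (Nat.dvd_add_right hra).mp hrb
    have hrm : r ∣ m := by
      have h2 : r ^ 2 ∣ m ^ 2 := by
        rw [← hpyth]
        exact Nat.dvd_add (pow_dvd_pow_of_dvd hra 2) (pow_dvd_pow_of_dvd hrb 2)
      exact hr.dvd_of_dvd_pow (dvd_trans (dvd_pow_self r two_ne_zero) h2)
    have hrn : ¬ r ∣ n := fun hrn => Nat.Prime.one_lt hr |>.ne'
      (Nat.eq_one_of_dvd_one (hmn ▸ Nat.dvd_gcd hrm hrn))
    have hr2tn : r ^ 2 ∣ t * n ^ 2 := by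
      have h1 : r ^ 2 ∣ m ^ 2 := pow_dvd_pow_of_dvd hrm 2
      have h2 : r ^ 2 ∣ p ^ 2 := pow_dvd_pow_of_dvd hrp 2
      have h3 : t * n ^ 2 = m ^ 2 - p ^ 2 := by omega
      rw [h3]; exact Nat.dvd_sub h1 h2
    have hcoprn : Nat.Coprime (r ^ 2) (n ^ 2) :=
      Nat.Coprime.pow 2 2 ((Nat.Prime.coprime_iff_not_dvd hr).mpr hrn)
    have hr2t : r ^ 2 ∣ t := hcoprn.dvd_of_dvd_mul_right hr2tn
    exact hr.not_isUnit (htsf r (by rw [← pow_two]; exact hr2t))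
  refine ⟨a, a + p, by omega, by omega, ha0, by omega, hpyth, hcop, ?_, ?_, harea⟩
  · by_contra hne
    obtain ⟨r, hr, hrd⟩ := Nat.exists_prime_and_dvd hne
    have hra : r ∣ a := hrd.trans (Nat.gcd_dvd_left _ _)
    have hrm : r ∣ m := hrd.trans (Nat.gcd_dvd_right _ _)
    have hrb : r ∣ a + p := by
      have h2 : r ^ 2 ∣ (a + p) ^ 2 := by
        have h3 : (a + p) ^ 2 = m ^ 2 - a ^ 2 := by omega
        rw [h3]; exact Nat.dvd_sub (pow_dvd_pow_of_dvd hrm 2) (pow_dvd_pow_of_dvd hra 2)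
      exact hr.dvd_of_dvd_pow (dvd_trans (dvd_pow_self r two_ne_zero) h2)
    exact Nat.Prime.one_lt hr |>.ne' (Nat.eq_one_of_dvd_one (hcop ▸ Nat.dvd_gcd hra hrb))
  · by_contra hne
    obtain ⟨r, hr, hrd⟩ := Nat.exists_prime_and_dvd hne
    have hrb : r ∣ a + p := hrd.trans (Nat.gcd_dvd_left _ _)
    have hrm : r ∣ m := hrd.trans (Nat.gcd_dvd_right _ _)
    have hra : r ∣ a := by
      have h2 : r ^ 2 ∣ a ^ 2 := by
        have h3 : a ^ 2 = m ^ 2 - (a + p) ^ 2 := by omega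
        rw [h3]; exact Nat.dvd_sub (pow_dvd_pow_of_dvd hrm 2) (pow_dvd_pow_of_dvd hrb 2)
      exact hr.dvd_of_dvd_pow (dvd_trans (dvd_pow_self r two_ne_zero) h2)
    exact Nat.Prime.one_lt hr |>.ne' (Nat.eq_one_of_dvd_one (hcop ▸ Nat.dvd_gcd hra hrb))
end

section
/- Let t be a squarefree positive integer. The set of primitive Pythagorean triples (a,b,c) with a < b < c whose area ab/2 has squarefree part t is in bijection with the set of coprime pairs of positive integers (m,n) such that m^2 + t·n^2 and m^2 - t·n^2 are both perfect squares, via (a,b,c) ↦ (c, √(2ab/t)). -/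
private lemma aux_sq4 (x : ℕ) : (x % 2 = 0 ∧ x ^ 2 % 4 = 0) ∨ (x % 2 = 1 ∧ x ^ 2 % 4 = 1) := by
  rcases Nat.even_or_odd x with ⟨y, hy⟩ | ⟨y, hy⟩
  · left
    have : x ^ 2 = 4 * y ^ 2 := by subst hy; ring
    omega
  · right
    have : x ^ 2 = 4 * (y ^ 2 + y) + 1 := by subst hy; ring
    omega

private lemma aux_coprime_of (x y : ℕ) (h : ∀ p : ℕ, p.Prime → p ∣ x → p ∣ y → False) :
    Nat.Coprime x y := by
  by_contra hc
  exact h _ (Nat.minFac_prime hc) ((Nat.minFac_dvd _).trans (Nat.gcd_dvd_left x y))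
    ((Nat.minFac_dvd _).trans (Nat.gcd_dvd_right x y))

/-- abstract mod-4 contradiction showing n must be even -/
private lemma aux_mod4 (t U S M T : ℕ) (h4 : t % 4 ≠ 0)
    (hU : U % 4 = 0 ∨ U % 4 = 1) (hS : S % 4 = 0 ∨ S % 4 = 1) (hM : M % 4 = 0 ∨ M % 4 = 1)
    (hT : T % 4 = t % 4) (e1 : U = M + T) (e2 : S + T = M) : False := by omega

/-- backward direction : from a pair (m,n) construct a triple -/
private lemma backward (t m n : ℕ) (ht : 0 < t) (htsf : Squarefree t) (hm : 0 < m) (hn : 0 < n)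
    (cmn : Nat.Coprime m n) (hsq : IsSquare (m ^ 2 + t * n ^ 2))
    (hex : ∃ s : ℕ, s ^ 2 + t * n ^ 2 = m ^ 2) :
    ∀ u s a b : ℕ, u = Nat.sqrt (m ^ 2 + t * n ^ 2) → s = Nat.sqrt (m ^ 2 - t * n ^ 2) →
      a = (u - s) / 2 → b = (u + s) / 2 →
      (0 < a ∧ a < b ∧ b < m ∧ a ^ 2 + b ^ 2 = m ^ 2 ∧ Nat.Coprime a b ∧ Nat.Coprime a m ∧
        Nat.Coprime b m ∧ ∃ k : ℕ, 0 < k ∧ a * b = 2 * (t * k ^ 2)) ∧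
      Nat.sqrt (2 * a * b / t) = n := by
  obtain ⟨r, hr⟩ := hsq
  obtain ⟨s0, hs0⟩ := hex
  intro u s a b hu hs ha hb
  have hu2 : u ^ 2 = m ^ 2 + t * n ^ 2 := by
    rw [hu, hr, Nat.sqrt_eq]; ring
  have hsub : m ^ 2 - t * n ^ 2 = s0 ^ 2 := by omega
  have hss0 : s = s0 := by rw [hs, hsub, Nat.sqrt_eq']
  have hs2 : s ^ 2 + t * n ^ 2 = m ^ 2 := by rw [hss0]; exact hs0
  have htn : 0 < t * n ^ 2 := by positivity
  -- n is even
  have h4 : ¬ (4 ∣ t) := by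
    intro hd
    have h := htsf 2 (by omega)
    have := Nat.isUnit_iff.mp h
    omega
  have hneven : n % 2 = 0 := by
    by_contra hodd
    have hn4 : n ^ 2 % 4 = 1 := by rcases aux_sq4 n with ⟨h1, h2⟩ | ⟨h1, h2⟩ <;> omega
    have hT : t * n ^ 2 % 4 = t % 4 := by
      have h6 : t * n ^ 2 ≡ t * 1 [MOD 4] :=
        Nat.ModEq.mul_left t (show n ^ 2 ≡ 1 [MOD 4] by unfold Nat.ModEq; omega)
      simpa [Nat.ModEq] using h6
    exact aux_mod4 t (u ^ 2) (s ^ 2) (m ^ 2) (t * n ^ 2) (by omega)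
      (by rcases aux_sq4 u with h | h <;> omega) (by rcases aux_sq4 s with h | h <;> omega)
      (by rcases aux_sq4 m with h | h <;> omega) hT hu2 hs2
  -- m is odd
  have hnb : ¬ (2 ∣ m ∧ 2 ∣ n) := by
    rintro ⟨h1, h2⟩
    have := Nat.dvd_gcd h1 h2
    rw [cmn] at this; omega
  have hmodd : m % 2 = 1 := by
    rcases Nat.even_or_odd m with h | h
    · exact absurd ⟨h.two_dvd, by omega⟩ hnb
    · omega
  -- u and s are odd
  have husum : u ^ 2 + s ^ 2 = 2 * m ^ 2 := by omega
  have hm4 : m ^ 2 % 4 = 1 := by rcases aux_sq4 m with h | h <;> omega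
  have huodd : u % 2 = 1 := by
    rcases aux_sq4 u with h | h
    · rcases aux_sq4 s with h' | h' <;> omega
    · omega
  have hsodd : s % 2 = 1 := by
    rcases aux_sq4 s with h | h
    · rcases aux_sq4 u with h' | h' <;> omega
    · omega
  -- s < u
  have hsu : s < u := by
    have : s ^ 2 < u ^ 2 := by omega
    exact lt_of_pow_lt_pow_left₀ 2 (Nat.zero_le _) this
  have h2a : 2 * a = u - s := by omega
  have h2b : 2 * b = u + s := by omega
  have hapos : 0 < a := by omega
  have haltb : a < b := by omega
  have habu : a + b = u := by omega
  have hbas : b = a + s := by omega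
  -- integer versions
  have ZA : 2 * (a : ℤ) = (u : ℤ) - s := by
    have := h2a; zify [Nat.le_of_lt hsu] at this; linarith
  have ZB : 2 * (b : ℤ) = (u : ℤ) + s := by exact_mod_cast h2b
  have ZU : (u : ℤ) ^ 2 = (m : ℤ) ^ 2 + t * n ^ 2 := by exact_mod_cast hu2
  have ZS : (s : ℤ) ^ 2 + t * n ^ 2 = (m : ℤ) ^ 2 := by exact_mod_cast hs2
  -- Pythagorean relation
  have key4 : 4 * ((a : ℤ) ^ 2 + (b : ℤ) ^ 2) = 4 * (m : ℤ) ^ 2 := by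
    linear_combination (2 * (a : ℤ) + u - s) * ZA + (2 * (b : ℤ) + u + s) * ZB + 2 * ZU + 2 * ZS
  have hpy : a ^ 2 + b ^ 2 = m ^ 2 := by
    have : (a : ℤ) ^ 2 + (b : ℤ) ^ 2 = (m : ℤ) ^ 2 := by linarith
    exact_mod_cast this
  -- product relation
  have hprod4 : 4 * ((a : ℤ) * b) = 2 * t * n ^ 2 := by
    linear_combination 2 * (b : ℤ) * ZA + ((u : ℤ) - s) * ZB + ZU - ZS
  have hprod2 : 2 * (a * b) = t * n ^ 2 := by
    have : 2 * ((a : ℤ) * b) = (t : ℤ) * n ^ 2 := by linarith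
    exact_mod_cast this
  -- b < m
  have hbm : b < m := by
    have h0 : 0 < a ^ 2 := by positivity
    have h1 : b ^ 2 < m ^ 2 := by omega
    exact lt_of_pow_lt_pow_left₀ 2 (Nat.zero_le _) h1
  -- the k
  have hk2 : n = 2 * (n / 2) := by omega
  set K := n / 2 with hK
  have hKpos : 0 < K := by omega
  have habk : a * b = 2 * (t * K ^ 2) := by
    have hcast : (n : ℤ) = 2 * (K : ℤ) := by exact_mod_cast hk2
    have key : 4 * ((a : ℤ) * b) = 4 * (2 * ((t : ℤ) * K ^ 2)) := by
      linear_combination hprod4 + 2 * (t : ℤ) * ((n : ℤ) + 2 * K) * hcast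
    have : (a : ℤ) * b = 2 * ((t : ℤ) * K ^ 2) := by linarith
    exact_mod_cast this
  -- coprimality a b
  have cab : Nat.Coprime a b := by
    apply aux_coprime_of
    intro p hp pa pb
    have hpne2 : p ≠ 2 := by
      rintro rfl
      omega
    have hpdm : p ∣ m := by
      have h1 : p ∣ a ^ 2 + b ^ 2 := dvd_add (dvd_pow pa two_ne_zero) (dvd_pow pb two_ne_zero)
      rw [hpy] at h1
      exact hp.dvd_of_dvd_pow h1
    have hpn : ¬ p ∣ n := by
      intro hpn
      have := Nat.dvd_gcd hpdm hpn
      rw [cmn] at this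
      exact hp.one_lt.ne' (Nat.eq_one_of_dvd_one this ▸ rfl)
    have hpK : ¬ p ∣ K := fun h => hpn (hk2 ▸ Dvd.dvd.mul_left h 2)
    have hp2 : ¬ p ∣ 2 := fun h => hpne2 ((Nat.prime_dvd_prime_iff_eq hp Nat.prime_two).mp h)
    have cp : Nat.Coprime p (2 * K ^ 2) :=
      Nat.Coprime.mul_right ((Nat.Prime.coprime_iff_not_dvd hp).mpr hp2)
        (Nat.Coprime.pow_right 2 ((Nat.Prime.coprime_iff_not_dvd hp).mpr hpK))
    have cpp : Nat.Coprime (p * p) (2 * K ^ 2) := Nat.Coprime.mul cp cp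
    have hdvd : p * p ∣ (2 * K ^ 2) * t := by
      have : (2 * K ^ 2) * t = a * b := by rw [habk]; ring
      rw [this]
      exact mul_dvd_mul pa pb
    have hppt : p * p ∣ t := (Nat.Coprime.dvd_of_dvd_mul_left cpp hdvd)
    have := Nat.isUnit_iff.mp (htsf p hppt)
    exact hp.one_lt.ne' this
  -- coprimality a m
  have cam : Nat.Coprime a m := by
    apply aux_coprime_of
    intro p hp pa pm
    have h1 : p ∣ a ^ 2 + b ^ 2 := hpy ▸ dvd_pow pm two_ne_zero
    have h2 : p ∣ b ^ 2 := (Nat.dvd_add_right (dvd_pow pa two_ne_zero)).mp h1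
    have h3 : p ∣ b := hp.dvd_of_dvd_pow h2
    have := Nat.dvd_gcd pa h3
    rw [cab] at this
    exact hp.one_lt.ne' (Nat.eq_one_of_dvd_one this)
  have cbm : Nat.Coprime b m := by
    apply aux_coprime_of
    intro p hp pb pm
    have h1 : p ∣ a ^ 2 + b ^ 2 := hpy ▸ dvd_pow pm two_ne_zero
    have h2 : p ∣ a ^ 2 := (Nat.dvd_add_left (dvd_pow pb two_ne_zero)).mp h1
    have h3 : p ∣ a := hp.dvd_of_dvd_pow h2
    have := Nat.dvd_gcd h3 pb
    rw [cab] at this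
    exact hp.one_lt.ne' (Nat.eq_one_of_dvd_one this)
  refine ⟨⟨hapos, haltb, hbm, hpy, cab, cam, cbm, K, hKpos, habk⟩, ?_⟩
  have : 2 * a * b = t * n ^ 2 := by rw [mul_assoc]; exact hprod2
  rw [this, Nat.mul_div_cancel_left _ ht, Nat.sqrt_eq']

/-- forward direction : a primitive triple gives a valid pair -/
private lemma forward (t a b c k : ℕ) (ht : 0 < t)
    (ha : 0 < a) (hab : a < b) (hbc : b < c)
    (hpy : a ^ 2 + b ^ 2 = c ^ 2) (cab : Nat.Coprime a b) (cac : Nat.Coprime a c)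
    (cbc : Nat.Coprime b c) (hk : 0 < k) (hprod : a * b = 2 * (t * k ^ 2)) :
    (0 < c ∧ 0 < 2 * k ∧ Nat.Coprime c (2 * k) ∧ IsSquare (c ^ 2 + t * (2 * k) ^ 2) ∧
      ∃ s : ℕ, s ^ 2 + t * (2 * k) ^ 2 = c ^ 2) ∧ Nat.sqrt (2 * a * b / t) = 2 * k := by
  have h1 : (a : ℤ) ^ 2 + b ^ 2 = c ^ 2 := by exact_mod_cast hpy
  have h2 : (a : ℤ) * b = 2 * (t * k ^ 2) := by exact_mod_cast hprod
  have hnb : ¬ (2 ∣ a ∧ 2 ∣ b) := by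
    rintro ⟨u, v⟩
    have := Nat.dvd_gcd u v
    rw [cab] at this; omega
  have codd : c % 2 = 1 := by
    rcases aux_sq4 a with hA | hA <;> rcases aux_sq4 b with hB | hB <;>
      rcases aux_sq4 c with hC | hC <;> omega
  refine ⟨⟨by omega, by omega, ?_, ⟨a + b, ?_⟩, ⟨b - a, ?_⟩⟩, ?_⟩
  · apply aux_coprime_of
    intro p hp pc pk2
    have hpne2 : p ≠ 2 := by
      rintro rfl
      omega
    have hpk : p ∣ k := by
      rcases (Nat.Prime.dvd_mul hp).mp pk2 with h | h
      · exact absurd ((Nat.prime_dvd_prime_iff_eq hp Nat.prime_two).mp h) hpne2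
      · exact h
    have hpab : p ∣ a * b := by
      rw [hprod]
      exact Dvd.dvd.mul_left (Dvd.dvd.mul_left (dvd_pow hpk two_ne_zero) t) 2
    rcases (Nat.Prime.dvd_mul hp).mp hpab with h | h
    · have := Nat.dvd_gcd h pc
      rw [cac] at this; exact hp.one_lt.ne' (Nat.eq_one_of_dvd_one this ▸ rfl)
    · have := Nat.dvd_gcd h pc
      rw [cbc] at this; exact hp.one_lt.ne' (Nat.eq_one_of_dvd_one this ▸ rfl)
  · have : (c : ℤ) ^ 2 + t * (2 * k) ^ 2 = ((a : ℤ) + b) * ((a : ℤ) + b) := by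
      linear_combination -h1 - 2 * h2
    exact_mod_cast this
  · have : ((b : ℤ) - a) ^ 2 + t * (2 * k) ^ 2 = (c : ℤ) ^ 2 := by
      linear_combination h1 - 2 * h2
    have hz : ((b - a : ℕ) : ℤ) = (b : ℤ) - a := by
      simp [Nat.cast_sub (Nat.le_of_lt hab)]
    have : ((b - a : ℕ) : ℤ) ^ 2 + t * (2 * k) ^ 2 = (c : ℤ) ^ 2 := by rw [hz]; exact this
    exact_mod_cast this
  · have h3 : 2 * a * b = t * (2 * k) ^ 2 := by
      have : 2 * ((a : ℤ) * b) = (t : ℤ) * (2 * k) ^ 2 := by linarith [h2]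
      have h4 : 2 * (a * b) = t * (2 * k) ^ 2 := by exact_mod_cast (by linear_combination 2 * h2 : 2 * ((a : ℤ) * b) = (t : ℤ) * (2 * k) ^ 2)
      rw [mul_assoc]; exact h4
    rw [h3, Nat.mul_div_cancel_left _ ht, Nat.sqrt_eq']

theorem primitive_triples_biject_with_pairs (t : ℕ) (ht : 0 < t) (htsf : Squarefree t) :
    ∃ e : {p : ℕ × ℕ × ℕ // 0 < p.1 ∧ p.1 < p.2.1 ∧ p.2.1 < p.2.2 ∧
            p.1 ^ 2 + p.2.1 ^ 2 = p.2.2 ^ 2 ∧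
            Nat.Coprime p.1 p.2.1 ∧ Nat.Coprime p.1 p.2.2 ∧ Nat.Coprime p.2.1 p.2.2 ∧
            ∃ k : ℕ, 0 < k ∧ p.1 * p.2.1 = 2 * (t * k ^ 2)} ≃
          {q : ℕ × ℕ // 0 < q.1 ∧ 0 < q.2 ∧ Nat.Coprime q.1 q.2 ∧
            IsSquare (q.1 ^ 2 + t * q.2 ^ 2) ∧
            ∃ s : ℕ, s ^ 2 + t * q.2 ^ 2 = q.1 ^ 2},
      ∀ x, (e x).val = (x.val.2.2, Nat.sqrt (2 * x.val.1 * x.val.2.1 / t)) := by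
  refine ⟨⟨fun x => ⟨(x.val.2.2, Nat.sqrt (2 * x.val.1 * x.val.2.1 / t)), ?_⟩,
    fun q => ⟨((Nat.sqrt (q.val.1 ^ 2 + t * q.val.2 ^ 2) - Nat.sqrt (q.val.1 ^ 2 - t * q.val.2 ^ 2)) / 2,
      (Nat.sqrt (q.val.1 ^ 2 + t * q.val.2 ^ 2) + Nat.sqrt (q.val.1 ^ 2 - t * q.val.2 ^ 2)) / 2,
      q.val.1), ?_⟩, ?_, ?_⟩, fun x => rfl⟩
  · obtain ⟨⟨a, b, c⟩, ha, hab, hbc, hpy, cab, cac, cbc, k, hk, hprod⟩ := x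
    obtain ⟨⟨h1, h2, h3, h4, h5⟩, h6⟩ := forward t a b c k ht ha hab hbc hpy cab cac cbc hk hprod
    show 0 < c ∧ 0 < Nat.sqrt (2 * a * b / t) ∧ Nat.Coprime c (Nat.sqrt (2 * a * b / t)) ∧
      IsSquare (c ^ 2 + t * (Nat.sqrt (2 * a * b / t)) ^ 2) ∧
      ∃ s : ℕ, s ^ 2 + t * (Nat.sqrt (2 * a * b / t)) ^ 2 = c ^ 2
    rw [h6]
    exact ⟨h1, h2, h3, h4, h5⟩
  · obtain ⟨⟨m, n⟩, hm, hn, cmn, hsq, hex⟩ := q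
    obtain ⟨⟨h1, h2, h3, h4, h5, h6, h7, h8⟩, _⟩ :=
      backward t m n ht htsf hm hn cmn hsq hex _ _ _ _ rfl rfl rfl rfl
    exact ⟨h1, h2, h3, h4, h5, h6, h7, h8⟩
  · rintro ⟨⟨a, b, c⟩, hx⟩
    obtain ⟨ha, hab, hbc, hpy, cab, cac, cbc, k, hk, hprod⟩ := hx
    replace ha : 0 < a := ha
    replace hab : a < b := hab
    replace hbc : b < c := hbc
    replace hpy : a ^ 2 + b ^ 2 = c ^ 2 := hpy
    replace cab : Nat.Coprime a b := cab
    replace cac : Nat.Coprime a c := cac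
    replace cbc : Nat.Coprime b c := cbc
    replace hprod : a * b = 2 * (t * k ^ 2) := hprod
    obtain ⟨⟨h1, h2, h3, h4, h5⟩, h6⟩ := forward t a b c k ht ha hab hbc hpy cab cac cbc hk hprod
    apply Subtype.ext
    simp only [h6]
    -- now goal is about sqrt of c^2 ± t*(2k)^2
    have e1 : c ^ 2 + t * (2 * k) ^ 2 = (a + b) ^ 2 := by
      obtain ⟨w, hw⟩ := h4
      have : (c : ℤ) ^ 2 + t * (2 * k) ^ 2 = ((a : ℤ) + b) ^ 2 := by
        have h1' : (a : ℤ) ^ 2 + b ^ 2 = c ^ 2 := by exact_mod_cast hpy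
        have h2' : (a : ℤ) * b = 2 * (t * k ^ 2) := by exact_mod_cast hprod
        linear_combination -h1' - 2 * h2'
      exact_mod_cast this
    obtain ⟨s, hs⟩ := h5
    have hsba : s = b - a := by
      have h1' : (a : ℤ) ^ 2 + b ^ 2 = c ^ 2 := by exact_mod_cast hpy
      have h2' : (a : ℤ) * b = 2 * (t * k ^ 2) := by exact_mod_cast hprod
      have hs' : (s : ℤ) ^ 2 + t * (2 * k) ^ 2 = (c : ℤ) ^ 2 := by exact_mod_cast hs
      have : (s : ℤ) ^ 2 = ((b : ℤ) - a) ^ 2 := by linear_combination hs' - h1' + 2 * h2'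
      have habs : (s : ℤ) = (b : ℤ) - a ∨ (s : ℤ) = -((b : ℤ) - a) := sq_eq_sq_iff_eq_or_eq_neg.mp this
      rcases habs with h | h
      · omega
      · omega
    subst hsba
    have e2 : c ^ 2 - t * (2 * k) ^ 2 = (b - a) ^ 2 := by omega
    rw [e1, e2, Nat.sqrt_eq', Nat.sqrt_eq']
    simp only [Prod.mk.injEq]
    exact ⟨by omega, by omega, trivial⟩
  · rintro ⟨⟨m, n⟩, hq⟩
    obtain ⟨hm, hn, cmn, hsq, hex⟩ := hq
    replace hm : 0 < m := hm
    replace hn : 0 < n := hn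
    replace cmn : Nat.Coprime m n := cmn
    replace hsq : IsSquare (m ^ 2 + t * n ^ 2) := hsq
    replace hex : ∃ s : ℕ, s ^ 2 + t * n ^ 2 = m ^ 2 := hex
    obtain ⟨⟨h1, h2, h3, h4, h5, h6, h7, h8⟩, h9⟩ :=
      backward t m n ht htsf hm hn cmn hsq hex _ _ _ _ rfl rfl rfl rfl
    apply Subtype.ext
    simp only [h9]
end

section
/- Let t be a squarefree positive integer. An integer m is the hypotenuse of a primitive Pythagorean triple whose area has squarefree part t if and only if there exist positive rationals R1, R2, h with R1^2 + R2^2 = h^2, R1·R2/2 = t, and m is the numerator of h written in lowest terms. -/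
lemma den_one_of_sq_eq_int (x : ℚ) (N : ℤ) (hx : x ^ 2 = (N : ℚ)) : x.den = 1 := by
  have h1 : (x ^ 2).den = 1 := by rw [hx]; exact Rat.den_intCast N
  rw [Rat.den_pow] at h1
  nlinarith [x.pos]

lemma coprime_of_sq_add (a b m : ℕ) (hsum : a ^ 2 + b ^ 2 = m ^ 2)
    (hab : Nat.Coprime a b) : Nat.Coprime a m := by
  have h1 : Nat.gcd a m ∣ b ^ 2 := by
    have h2 : Nat.gcd a m ∣ m ^ 2 - a ^ 2 :=
      Nat.dvd_sub (dvd_pow (Nat.gcd_dvd_right a m) two_ne_zero)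
        (dvd_pow (Nat.gcd_dvd_left a m) two_ne_zero)
    have h3 : m ^ 2 - a ^ 2 = b ^ 2 := by omega
    rwa [h3] at h2
  have h3 : Nat.Coprime (Nat.gcd a m) (b ^ 2) :=
    Nat.Coprime.coprime_dvd_left (Nat.gcd_dvd_left a m) (hab.pow_right 2)
  exact h3.eq_one_of_dvd h1

lemma zmod4_key : ∀ x y z : ZMod 4, (2 * x + 1) ^ 2 + (2 * y + 1) ^ 2 ≠ z ^ 2 := by decide

lemma coprime_main (t m n a b : ℕ) (htsf : Squarefree t)
    (hsum : a ^ 2 + b ^ 2 = m ^ 2) (hprod : a * b = 2 * (t * n ^ 2))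
    (hmn : Nat.Coprime m n) : Nat.Coprime a b := by
  by_contra hg
  set p := (Nat.gcd a b).minFac with hp_def
  have hp : p.Prime := Nat.minFac_prime hg
  have hpa : p ∣ a := (Nat.minFac_dvd _).trans (Nat.gcd_dvd_left a b)
  have hpb : p ∣ b := (Nat.minFac_dvd _).trans (Nat.gcd_dvd_right a b)
  have hpm : p ∣ m := by
    have h : p ∣ m ^ 2 := hsum ▸ dvd_add (dvd_pow hpa two_ne_zero) (dvd_pow hpb two_ne_zero)
    exact hp.dvd_of_dvd_pow h
  have hpn : ¬ p ∣ n := by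
    intro hdn
    have := Nat.dvd_gcd hpm hdn
    rw [hmn] at this
    exact hp.one_lt.ne' (Nat.dvd_one.mp this)
  have hp2 : p ^ 2 ∣ 2 * t := by
    have h1 : p ^ 2 ∣ (2 * t) * n ^ 2 := by
      have he : a * b = (2 * t) * n ^ 2 := by rw [hprod]; ring
      rw [← he, sq]
      exact mul_dvd_mul hpa hpb
    have hcp : Nat.Coprime (p ^ 2) (n ^ 2) :=
      ((hp.coprime_iff_not_dvd).mpr hpn).pow 2 2
    exact hcp.dvd_of_dvd_mul_right h1
  rcases hp.eq_two_or_odd' with hp2' | hodd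
  · -- p = 2
    rw [hp2'] at hpa hpb hpm hpn hp2
    have h2t : 2 ∣ t := by
      have h4 : 4 ∣ 2 * t := by simpa [pow_two] using hp2
      omega
    obtain ⟨u, hu⟩ := h2t
    have huodd : ¬ 2 ∣ u := by
      intro h2u
      have : 2 * 2 ∣ t := by omega
      exact (Nat.prime_two).not_isUnit (htsf 2 (by simpa [sq] using this))
    obtain ⟨a', ha'⟩ := hpa
    obtain ⟨b', hb'⟩ := hpb
    obtain ⟨m', hm'⟩ := hpm
    subst ha' hb' hm' hu
    have hnodd : ¬ 2 ∣ n := hpn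
    have hsum' : a' ^ 2 + b' ^ 2 = m' ^ 2 := by nlinarith [hsum]
    have hprod' : a' * b' = u * n ^ 2 := by nlinarith [hprod]
    have haodd : ¬ 2 ∣ a' := by
      intro h2a
      have h1 : 2 ∣ u * n ^ 2 := hprod' ▸ Dvd.dvd.mul_right h2a b'
      rcases (Nat.prime_two.dvd_mul.mp h1) with h | h
      · exact huodd h
      · exact hnodd (Nat.prime_two.dvd_of_dvd_pow h)
    have hbodd : ¬ 2 ∣ b' := by
      intro h2b
      have h1 : 2 ∣ u * n ^ 2 := hprod' ▸ Dvd.dvd.mul_left h2b a'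
      rcases (Nat.prime_two.dvd_mul.mp h1) with h | h
      · exact huodd h
      · exact hnodd (Nat.prime_two.dvd_of_dvd_pow h)
    obtain ⟨j, hj⟩ : ∃ j, a' = 2 * j + 1 := ⟨a' / 2, by omega⟩
    obtain ⟨l, hl⟩ : ∃ l, b' = 2 * l + 1 := ⟨b' / 2, by omega⟩
    apply zmod4_key (j : ZMod 4) (l : ZMod 4) (m' : ZMod 4)
    have : ((2 * j + 1) ^ 2 + (2 * l + 1) ^ 2 : ℕ) = m' ^ 2 := by rw [← hj, ← hl]; exact hsum'
    exact_mod_cast congrArg (Nat.cast : ℕ → ZMod 4) this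
  · -- p odd
    have hcp2 : Nat.Coprime (p ^ 2) 2 :=
      Nat.Coprime.pow_left 2 ((hp.coprime_iff_not_dvd).mpr (by
        intro h
        rcases (Nat.prime_two.eq_one_or_self_of_dvd p h) with h1 | h1
        · exact hp.one_lt.ne' h1
        · rw [h1] at hodd; exact (Nat.not_odd_iff_even.mpr even_two) hodd))
    have : p ^ 2 ∣ t := hcp2.dvd_of_dvd_mul_left hp2
    exact hp.not_isUnit (htsf p (by simpa [sq] using this))

theorem hypotenuse_iff_numerator (t : ℕ) (ht : 0 < t) (htsf : Squarefree t)
    (m : ℕ) (hm : 0 < m) :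
    (∃ a b : ℕ, 0 < a ∧ 0 < b ∧ a ^ 2 + b ^ 2 = m ^ 2 ∧
        Nat.Coprime a b ∧ Nat.Coprime a m ∧ Nat.Coprime b m ∧
        ∃ k : ℕ, 0 < k ∧ a * b = 2 * (t * k ^ 2)) ↔
      ∃ R1 R2 h : ℚ, 0 < R1 ∧ 0 < R2 ∧ 0 < h ∧
        R1 ^ 2 + R2 ^ 2 = h ^ 2 ∧ R1 * R2 / 2 = t ∧ h.num = (m : ℤ) := by
  constructor
  · rintro ⟨a, b, ha, hb, habm, hab, ham, hbm, k, hk, hk2⟩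
    have hkq : (k : ℚ) ≠ 0 := Nat.cast_ne_zero.mpr hk.ne'
    refine ⟨a / k, b / k, m / k, ?_, ?_, ?_, ?_, ?_, ?_⟩
    · exact div_pos (by exact_mod_cast ha) (by positivity)
    · exact div_pos (by exact_mod_cast hb) (by positivity)
    · exact div_pos (by exact_mod_cast hm) (by positivity)
    · have h1 : (a : ℚ) ^ 2 + (b : ℚ) ^ 2 = (m : ℚ) ^ 2 := by exact_mod_cast habm
      field_simp
      linarith [h1]
    · have h2 : (a : ℚ) * b = 2 * (t * (k : ℚ) ^ 2) := by exact_mod_cast hk2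
      field_simp
      linarith [h2]
    · have hmk : Nat.Coprime m k := by
        have hkab : k ∣ a * b := ⟨2 * (t * k), by rw [hk2]; ring⟩
        exact (Nat.Coprime.coprime_dvd_left hkab (ham.mul hbm)).symm
      have : ((m : ℚ) / (k : ℚ)) = ((m : ℤ) : ℚ) / ((k : ℤ) : ℚ) := by push_cast; ring
      rw [this, Rat.num_div_eq_of_coprime (by exact_mod_cast hk) (by simpa using hmk)]
  · rintro ⟨R1, R2, h, hR1, hR2, hh, heq, harea, hnum⟩
    set n := h.den with hn_def
    have hn : 0 < n := h.pos
    have hnq : (n : ℚ) ≠ 0 := Nat.cast_ne_zero.mpr hn.ne'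
    have hmn : Nat.Coprime m n := by
      have := h.reduced
      rwa [hnum, Int.natAbs_natCast] at this
    have hhn : h * (n : ℚ) = (m : ℚ) := by
      have h1 : h * (h.den : ℚ) = (h.num : ℚ) := Rat.mul_den_eq_num h
      rw [hnum] at h1
      rw [h1]
      push_cast
      ring
    set x := R1 * (n : ℚ) with hx_def
    set y := R2 * (n : ℚ) with hy_def
    have hxy2 : x ^ 2 + y ^ 2 = (m : ℚ) ^ 2 := by
      rw [hx_def, hy_def]
      linear_combination ((n : ℚ) ^ 2) * heq + (h * (n : ℚ) + (m : ℚ)) * hhn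
    have hxyprod : x * y = 2 * (t * (n : ℚ) ^ 2) := by
      rw [hx_def, hy_def]
      linear_combination 2 * ((n : ℚ) ^ 2) * harea
    -- s = x + y and d = x - y are integers
    have hs2 : (x + y) ^ 2 = (((m : ℤ) ^ 2 + 4 * t * n ^ 2 : ℤ) : ℚ) := by
      push_cast
      linear_combination hxy2 + 2 * hxyprod
    have hd2 : (x - y) ^ 2 = (((m : ℤ) ^ 2 - 4 * t * n ^ 2 : ℤ) : ℚ) := by
      push_cast
      linear_combination hxy2 - 2 * hxyprod
    have hsden : (x + y).den = 1 := den_one_of_sq_eq_int _ _ hs2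
    have hdden : (x - y).den = 1 := den_one_of_sq_eq_int _ _ hd2
    set S := (x + y).num with hS_def
    set D := (x - y).num with hD_def
    have hSq : (S : ℚ) = x + y := (Rat.den_eq_one_iff _).mp hsden
    have hDq : (D : ℚ) = x - y := (Rat.den_eq_one_iff _).mp hdden
    clear_value S D
    -- S + D is even
    have hSD : (S + D) * (S - D) = 8 * t * n ^ 2 := by
      have h2 : ((S : ℚ) + (D : ℚ)) * ((S : ℚ) - (D : ℚ)) = ((8 * t * n ^ 2 : ℤ) : ℚ) := by
        rw [hSq, hDq]
        push_cast
        linear_combination 4 * hxyprod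
      exact_mod_cast h2
    have heven : 2 ∣ S + D ∧ 2 ∣ S - D := by
      have h1 : (2 : ℤ) ∣ (S + D) * (S - D) := ⟨4 * t * n ^ 2, by rw [hSD]; push_cast; ring⟩
      rcases (Int.prime_two.dvd_mul.mp h1) with h | h <;> omega
    obtain ⟨A, hA⟩ := heven.1
    obtain ⟨B, hB⟩ := heven.2
    have hAq : (A : ℚ) = x := by
      have h1 : ((2 * A : ℤ) : ℚ) = (S : ℚ) + (D : ℚ) := by rw [← hA]; push_cast; ring
      rw [hSq, hDq] at h1
      push_cast at h1
      linarith [h1]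
    have hBq : (B : ℚ) = y := by
      have h1 : ((2 * B : ℤ) : ℚ) = (S : ℚ) - (D : ℚ) := by rw [← hB]; push_cast; ring
      rw [hSq, hDq] at h1
      push_cast at h1
      linarith [h1]
    have hApos : 0 < A := by
      have : (0 : ℚ) < (A : ℚ) := by rw [hAq]; positivity
      exact_mod_cast this
    have hBpos : 0 < B := by
      have : (0 : ℚ) < (B : ℚ) := by rw [hBq]; positivity
      exact_mod_cast this
    set a := A.toNat with ha_def
    set b := B.toNat with hb_def
    have hAa : (a : ℤ) = A := Int.toNat_of_nonneg hApos.le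
    have hBb : (b : ℤ) = B := Int.toNat_of_nonneg hBpos.le
    have hsum : a ^ 2 + b ^ 2 = m ^ 2 := by
      have h1 : ((a : ℤ) ^ 2 + (b : ℤ) ^ 2 : ℤ) = (m : ℤ) ^ 2 := by
        rw [hAa, hBb]
        have : ((A : ℚ) ^ 2 + (B : ℚ) ^ 2 : ℚ) = ((m : ℤ) ^ 2 : ℤ) := by
          rw [hAq, hBq]; push_cast; linarith [hxy2]
        exact_mod_cast this
      exact_mod_cast h1
    have hprod : a * b = 2 * (t * n ^ 2) := by
      have h1 : ((a : ℤ) * (b : ℤ) : ℤ) = 2 * ((t : ℤ) * (n : ℤ) ^ 2) := by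
        rw [hAa, hBb]
        have : ((A : ℚ) * (B : ℚ) : ℚ) = ((2 * ((t : ℤ) * (n : ℤ) ^ 2) : ℤ) : ℚ) := by
          rw [hAq, hBq]; push_cast; linarith [hxyprod]
        exact_mod_cast this
      exact_mod_cast h1
    have hapos : 0 < a := by omega
    have hbpos : 0 < b := by omega
    have hab : Nat.Coprime a b := coprime_main t m n a b htsf hsum hprod hmn
    have ham : Nat.Coprime a m := coprime_of_sq_add a b m hsum hab
    have hbm : Nat.Coprime b m := coprime_of_sq_add b a m (by omega) hab.symm
    exact ⟨a, b, hapos, hbpos, hsum, hab, ham, hbm, n, hn, hprod⟩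
end

section
/- Let t be a squarefree positive integer and let (a,b,c) be a triple of nonzero rationals with a^2 + b^2 = c^2 and ab/2 = t. Then the point (x, y) = (tb/(c-a), 2t^2/(c-a)) is a rational point on the elliptic curve y^2 = x^3 - t^2 x with y ≠ 0 (in particular c ≠ a). -/
section Pythagorean

variable {K : Type*} [Field K] {a b c : K}

theorem sub_ne_zero_of_sq_add_sq_eq_sq (h : a ^ 2 + b ^ 2 = c ^ 2) (hb : b ≠ 0) : c - a ≠ 0 := by
  intro hca
  rw [sub_eq_zero.mp hca] at h
  exact hb (pow_eq_zero_iff two_ne_zero |>.mp (by linear_combination h))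

theorem sq_eq_cube_sub_of_sq_add_sq_eq_sq {n : K} (h : a ^ 2 + b ^ 2 = c ^ 2)
    (hab : a * b = 2 * n) (hca : c - a ≠ 0) :
    (2 * n ^ 2 / (c - a)) ^ 2 = (n * b / (c - a)) ^ 3 - n ^ 2 * (n * b / (c - a)) := by
  -- This is the curve equation multiplied by `(c - a) ^ 3 / n ^ 3`.
  have key : b ^ 3 - b * (c - a) ^ 2 = 4 * n * (c - a) := by
    linear_combination b * h + 2 * (c - a) * hab
  field_simp
  linear_combination (-n ^ 3) * key

end Pythagorean

theorem triangle_to_elliptic_point_general (t : ℕ) (ht : 0 < t)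
    (a b c : ℚ) (hb : b ≠ 0)
    (hpyth : a ^ 2 + b ^ 2 = c ^ 2) (harea : a * b / 2 = t) :
    c ≠ a ∧
      (2 * (t : ℚ) ^ 2 / (c - a)) ^ 2 =
        ((t : ℚ) * b / (c - a)) ^ 3 - (t : ℚ) ^ 2 * ((t : ℚ) * b / (c - a)) ∧
      2 * (t : ℚ) ^ 2 / (c - a) ≠ 0 := by
  have hca : c - a ≠ 0 := sub_ne_zero_of_sq_add_sq_eq_sq hpyth hb
  have hab : a * b = 2 * (t : ℚ) := by linear_combination 2 * harea
  refine ⟨sub_ne_zero.mp hca, sq_eq_cube_sub_of_sq_add_sq_eq_sq hpyth hab hca, ?_⟩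
  exact div_ne_zero (by positivity) hca

theorem triangle_to_elliptic_point (t : ℕ) (ht : 0 < t) (htsf : Squarefree t)
    (a b c : ℚ) (ha : a ≠ 0) (hb : b ≠ 0) (hc : c ≠ 0)
    (hpyth : a ^ 2 + b ^ 2 = c ^ 2) (harea : a * b / 2 = t) :
    c ≠ a ∧
      (2 * (t : ℚ) ^ 2 / (c - a)) ^ 2 =
        ((t : ℚ) * b / (c - a)) ^ 3 - (t : ℚ) ^ 2 * ((t : ℚ) * b / (c - a)) ∧
      2 * (t : ℚ) ^ 2 / (c - a) ≠ 0 :=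
  triangle_to_elliptic_point_general t ht a b c hb hpyth harea
end

section
/- Let t be a squarefree positive integer. The maps (a,b,c) ↦ (tb/(c-a), 2t^2/(c-a)) and (x,y) ↦ ((x^2-t^2)/y, 2tx/y, (x^2+t^2)/y) are mutually inverse bijections between rational triples (a,b,c) with a^2+b^2=c^2, ab/2 = t, and c ≠ a, and rational points (x,y) on y^2 = x^3 - t^2 x with y ≠ 0. -/
/-!
With `x = t b / (c - a)` and `y = 2 t² / (c - a)`, the relation `b² = (c - a)(c + a)` turns
`x³ - t² x` into `t³ b · 2a / (c - a)² = 4 t⁴ / (c - a)² = y²`. Conversely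
`((x² - t²)/y, 2tx/y, (x² + t²)/y)` is Pythagorean by `(x² - t²)² + (2tx)² = (x² + t²)²`, has
area `t (x³ - t² x) / y² = t`, and `c - a = 2 t² / y`, from which both composites are the identity.
-/

section TriangleToPoint

variable {K : Type*} [Field K] {t a b c : K}

theorem sq_eq_cube_sub_of_triangle (h2 : (2 : K) ≠ 0) (hpyth : a ^ 2 + b ^ 2 = c ^ 2)
    (harea : a * b / 2 = t) (hca : c ≠ a) :
    (2 * t ^ 2 / (c - a)) ^ 2 = (t * b / (c - a)) ^ 3 - t ^ 2 * (t * b / (c - a)) := by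
  have hd : c - a ≠ 0 := sub_ne_zero.mpr hca
  have hab : a * b = 2 * t := by rw [← harea]; field_simp
  field_simp
  linear_combination (-2 * (c - a) * t ^ 3) * hab - t ^ 3 * b * hpyth

theorem two_mul_sq_div_ne_zero (h2 : (2 : K) ≠ 0) (ht : t ≠ 0) (hca : c ≠ a) :
    2 * t ^ 2 / (c - a) ≠ 0 :=
  div_ne_zero (mul_ne_zero h2 (pow_ne_zero 2 ht)) (sub_ne_zero.mpr hca)

theorem triangle_of_point_of_triangle (h2 : (2 : K) ≠ 0) (ht : t ≠ 0)
    (hpyth : a ^ 2 + b ^ 2 = c ^ 2) (hca : c ≠ a) :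
    ((t * b / (c - a)) ^ 2 - t ^ 2) / (2 * t ^ 2 / (c - a)) = a ∧
      2 * t * (t * b / (c - a)) / (2 * t ^ 2 / (c - a)) = b ∧
      ((t * b / (c - a)) ^ 2 + t ^ 2) / (2 * t ^ 2 / (c - a)) = c := by
  have hd : c - a ≠ 0 := sub_ne_zero.mpr hca
  refine ⟨?_, ?_, ?_⟩ <;> field_simp
  · linear_combination hpyth
  · linear_combination hpyth

end TriangleToPoint

section PointToTriangle

variable {K : Type*} [Field K] {t x y : K}

theorem pythagorean_of_point :
    ((x ^ 2 - t ^ 2) / y) ^ 2 + (2 * t * x / y) ^ 2 = ((x ^ 2 + t ^ 2) / y) ^ 2 := by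
  rw [div_pow, div_pow, div_pow, ← add_div]
  ring

theorem area_of_point (h2 : (2 : K) ≠ 0) (hcurve : y ^ 2 = x ^ 3 - t ^ 2 * x) (hy : y ≠ 0) :
    (x ^ 2 - t ^ 2) / y * (2 * t * x / y) / 2 = t := by
  field_simp
  linear_combination (-t) * hcurve

theorem hyp_sub_leg_of_point : (x ^ 2 + t ^ 2) / y - (x ^ 2 - t ^ 2) / y = 2 * t ^ 2 / y := by
  ring

theorem hyp_ne_leg_of_point (h2 : (2 : K) ≠ 0) (ht : t ≠ 0) (hy : y ≠ 0) :
    (x ^ 2 + t ^ 2) / y ≠ (x ^ 2 - t ^ 2) / y := by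
  rw [← sub_ne_zero, hyp_sub_leg_of_point]
  exact div_ne_zero (mul_ne_zero h2 (pow_ne_zero 2 ht)) hy

theorem point_of_triangle_of_point (h2 : (2 : K) ≠ 0) (ht : t ≠ 0) (hy : y ≠ 0) :
    t * (2 * t * x / y) / ((x ^ 2 + t ^ 2) / y - (x ^ 2 - t ^ 2) / y) = x ∧
      2 * t ^ 2 / ((x ^ 2 + t ^ 2) / y - (x ^ 2 - t ^ 2) / y) = y := by
  rw [hyp_sub_leg_of_point]
  constructor <;> field_simp

end PointToTriangle

theorem triangle_elliptic_bijection_general (t : ℕ) (ht : 0 < t) :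
    (∀ a b c : ℚ, a ^ 2 + b ^ 2 = c ^ 2 → a * b / 2 = t → c ≠ a →
      ((2 * (t : ℚ) ^ 2 / (c - a)) ^ 2 =
          ((t : ℚ) * b / (c - a)) ^ 3 - (t : ℚ) ^ 2 * ((t : ℚ) * b / (c - a)) ∧
        2 * (t : ℚ) ^ 2 / (c - a) ≠ 0 ∧
        ((((t : ℚ) * b / (c - a)) ^ 2 - t ^ 2) / (2 * (t : ℚ) ^ 2 / (c - a)) = a ∧
          2 * t * ((t : ℚ) * b / (c - a)) / (2 * (t : ℚ) ^ 2 / (c - a)) = b ∧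
          (((t : ℚ) * b / (c - a)) ^ 2 + t ^ 2) / (2 * (t : ℚ) ^ 2 / (c - a)) = c))) ∧
    (∀ x y : ℚ, y ^ 2 = x ^ 3 - t ^ 2 * x → y ≠ 0 →
      (((x ^ 2 - t ^ 2) / y) ^ 2 + (2 * t * x / y) ^ 2 = ((x ^ 2 + t ^ 2) / y) ^ 2 ∧
        ((x ^ 2 - t ^ 2) / y) * (2 * t * x / y) / 2 = t ∧
        (x ^ 2 + t ^ 2) / y ≠ (x ^ 2 - t ^ 2) / y ∧
        ((t : ℚ) * (2 * t * x / y) / ((x ^ 2 + t ^ 2) / y - (x ^ 2 - t ^ 2) / y) = x ∧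
          2 * (t : ℚ) ^ 2 / ((x ^ 2 + t ^ 2) / y - (x ^ 2 - t ^ 2) / y) = y))) := by
  have ht' : (t : ℚ) ≠ 0 := by positivity
  have h2 : (2 : ℚ) ≠ 0 := two_ne_zero
  refine ⟨fun a b c hpyth harea hca => ?_, fun x y hcurve hy => ?_⟩
  · exact ⟨sq_eq_cube_sub_of_triangle h2 hpyth harea hca, two_mul_sq_div_ne_zero h2 ht' hca,
      triangle_of_point_of_triangle h2 ht' hpyth hca⟩
  · exact ⟨pythagorean_of_point, area_of_point h2 hcurve hy, hyp_ne_leg_of_point h2 ht' hy,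
      point_of_triangle_of_point h2 ht' hy⟩

theorem triangle_elliptic_bijection (t : ℕ) (ht : 0 < t) (htsf : Squarefree t) :
    (∀ a b c : ℚ, a ^ 2 + b ^ 2 = c ^ 2 → a * b / 2 = t → c ≠ a →
      ((2 * (t : ℚ) ^ 2 / (c - a)) ^ 2 =
          ((t : ℚ) * b / (c - a)) ^ 3 - (t : ℚ) ^ 2 * ((t : ℚ) * b / (c - a)) ∧
        2 * (t : ℚ) ^ 2 / (c - a) ≠ 0 ∧
        ((((t : ℚ) * b / (c - a)) ^ 2 - t ^ 2) / (2 * (t : ℚ) ^ 2 / (c - a)) = a ∧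
          2 * t * ((t : ℚ) * b / (c - a)) / (2 * (t : ℚ) ^ 2 / (c - a)) = b ∧
          (((t : ℚ) * b / (c - a)) ^ 2 + t ^ 2) / (2 * (t : ℚ) ^ 2 / (c - a)) = c))) ∧
    (∀ x y : ℚ, y ^ 2 = x ^ 3 - t ^ 2 * x → y ≠ 0 →
      (((x ^ 2 - t ^ 2) / y) ^ 2 + (2 * t * x / y) ^ 2 = ((x ^ 2 + t ^ 2) / y) ^ 2 ∧
        ((x ^ 2 - t ^ 2) / y) * (2 * t * x / y) / 2 = t ∧
        (x ^ 2 + t ^ 2) / y ≠ (x ^ 2 - t ^ 2) / y ∧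
        ((t : ℚ) * (2 * t * x / y) / ((x ^ 2 + t ^ 2) / y - (x ^ 2 - t ^ 2) / y) = x ∧
          2 * (t : ℚ) ^ 2 / ((x ^ 2 + t ^ 2) / y - (x ^ 2 - t ^ 2) / y) = y))) :=
  triangle_elliptic_bijection_general t ht
end
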